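/- arXiv:1201.5875 — 2 statements merged into one kernel-verified Lean document; each statement's English description precedes it below -/
import Mathlib

section
/- Let W be a domain in a complex manifold X covered by analytic discs with boundaries in W, let φ : W → [-∞,∞) be upper semicontinuous and bounded above by m ∈ ℝ, and for each real n ≥ m let φₙ : X → [-∞,∞) equal φ on W and n on X \ W. Then the largest plurisubharmonic minorant Pφₙ of φₙ on X equals Sφ, the largest plurisubharmonic subextension of φ to X, for every n ≥ m. -/
open Metric MeasureTheory Set Classical
open scoped ENNReal Real Topology

noncomputable def erealToENNReal (x : EReal) : ENNReal :=
  if x = ⊤ then ⊤ else ENNReal.ofReal x.toReal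

/-- Average of an `EReal`-valued function over the unit circle (parametrised by angle),
with respect to normalised arc length. -/
noncomputable def circAvg (g : ℝ → EReal) : EReal :=
  (((∫⁻ t in Set.Ioc (0:ℝ) (2*Real.pi), erealToENNReal (g t)) / ENNReal.ofReal (2*Real.pi) : ℝ≥0∞) : EReal) -
  (((∫⁻ t in Set.Ioc (0:ℝ) (2*Real.pi), erealToENNReal (-(g t))) / ENNReal.ofReal (2*Real.pi) : ℝ≥0∞) : EReal)

variable {E : Type*} [NormedAddCommGroup E] [NormedSpace ℂ E]

/-- An analytic disc: continuous on the closed unit disc, holomorphic on the open unit disc. -/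
def IsDisc (f : ℂ → E) : Prop :=
  ContinuousOn f (closedBall 0 1) ∧ DifferentiableOn ℂ f (ball 0 1)

/-- An analytic disc with image in the set `X`. -/
def IsDiscIn (f : ℂ → E) (X : Set E) : Prop :=
  IsDisc f ∧ MapsTo f (closedBall 0 1) X

/-- Boundary average `∫_𝕋 φ ∘ f dλ` of `φ` over the boundary of the disc `f`. -/
noncomputable def bAvg (φ : E → EReal) (f : ℂ → E) : EReal :=
  circAvg fun t => φ (f (Complex.exp (t * Complex.I)))

/-- Plurisubharmonicity on a set: upper semicontinuity, values in `[-∞,∞)`, and the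
sub-mean-value inequality over the boundary circle of every affine complex disc in the set. -/
def PSHOn (u : E → EReal) (U : Set E) : Prop :=
  UpperSemicontinuousOn u U ∧ (∀ x ∈ U, u x ≠ ⊤) ∧
  ∀ a b : E, (∀ z ∈ closedBall (0:ℂ) 1, a + z • b ∈ U) →
    u a ≤ circAvg fun t => u (a + Complex.exp (t * Complex.I) • b)

/-- `Sφ`: the pointwise supremum of all plurisubharmonic `u` on `X` with `u ≤ φ` on `W`. -/
noncomputable def subSup (φ : E → EReal) (W X : Set E) : E → EReal :=
  fun x => ⨆ u : {u : E → EReal // PSHOn u X ∧ ∀ w ∈ W, u w ≤ φ w}, u.1 x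

/-- A domain: a connected nonempty open set. -/
def IsDomain' (W : Set E) : Prop := IsOpen W ∧ IsConnected W

open scoped Manifold

/-- An analytic disc in a complex manifold `X` modelled on `E`: continuous on the closed
unit disc and holomorphic on the open unit disc. -/
def IsDiscM (E : Type*) [NormedAddCommGroup E] [NormedSpace ℂ E]
    {X : Type*} [TopologicalSpace X] [ChartedSpace E X] (f : ℂ → X) : Prop :=
  ContinuousOn f (closedBall 0 1) ∧ MDifferentiableOn 𝓘(ℂ, ℂ) 𝓘(ℂ, E) f (ball 0 1)

/-- Plurisubharmonicity on a subset of a complex manifold, via upper semicontinuity,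
values in `[-∞,∞)`, and the sub-mean-value inequality over all analytic discs in the set. -/
def PSHOnM (E : Type*) [NormedAddCommGroup E] [NormedSpace ℂ E]
    {X : Type*} [TopologicalSpace X] [ChartedSpace E X] (u : X → EReal) (S : Set X) : Prop :=
  UpperSemicontinuousOn u S ∧ (∀ x ∈ S, u x ≠ ⊤) ∧
  ∀ f : ℂ → X, IsDiscM E f → MapsTo f (closedBall 0 1) S →
    u (f 0) ≤ circAvg fun t => u (f (Complex.exp (t * Complex.I)))

/-! A plurisubharmonic `u` with `u ≤ φ` on `W` is at most `m ≤ n` on `W`. Every point `x ∉ W`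
lies on an analytic disc with boundary in `W`; precomposing the disc with a Möbius automorphism
moves `x` to its centre, and the sub-mean-value inequality bounds `u x` by the boundary average,
which is at most `n`. So the two families of competitors coincide. -/

open ComplexConjugate

namespace Complex

/-- The automorphism of the unit disc sending `0` to `a`. -/
noncomputable def discShift (a w : ℂ) : ℂ := (w + a) / (1 + conj a * w)

theorem discShift_zero (a : ℂ) : discShift a 0 = a := by simp [discShift]

theorem one_add_conj_mul_ne_zero {a w : ℂ} (ha : ‖a‖ < 1) (hw : ‖w‖ ≤ 1) :
    1 + conj a * w ≠ 0 := by
  intro h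
  have : ‖conj a * w‖ < 1 := by
    rw [norm_mul, RCLike.norm_conj]
    nlinarith [norm_nonneg a, norm_nonneg w]
  rw [eq_neg_of_add_eq_zero_right h] at this
  simp at this

theorem normSq_one_add_conj_mul_sub_normSq_add (a w : ℂ) :
    normSq (1 + conj a * w) - normSq (w + a) = (1 - normSq a) * (1 - normSq w) := by
  apply ofReal_injective
  push_cast
  simp only [← mul_conj, map_add, map_mul, map_one, conj_conj]
  ring

theorem one_sub_normSq_discShift {a w : ℂ} (ha : ‖a‖ < 1) (hw : ‖w‖ ≤ 1) :
    1 - normSq (discShift a w) =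
      (1 - normSq a) / normSq (1 + conj a * w) * (1 - normSq w) := by
  have hd : normSq (1 + conj a * w) ≠ 0 := normSq_eq_zero.not.mpr (one_add_conj_mul_ne_zero ha hw)
  rw [discShift, normSq_div, div_mul_eq_mul_div, ← normSq_one_add_conj_mul_sub_normSq_add,
    sub_div, div_self hd]

theorem exists_pos_one_sub_normSq_discShift_eq {a w : ℂ} (ha : ‖a‖ < 1) (hw : ‖w‖ ≤ 1) :
    ∃ c > 0, 1 - normSq (discShift a w) = c * (1 - normSq w) := by
  refine ⟨_, div_pos ?_ (normSq_pos.mpr (one_add_conj_mul_ne_zero ha hw)),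
    one_sub_normSq_discShift ha hw⟩
  rw [sub_pos, normSq_eq_norm_sq]
  exact sq_lt_one_iff₀ (norm_nonneg a) |>.mpr ha

variable {a : ℂ}

theorem mapsTo_discShift_closedBall (ha : ‖a‖ < 1) :
    MapsTo (discShift a) (closedBall 0 1) (closedBall 0 1) := by
  intro w hw
  rw [mem_closedBall_zero_iff] at hw ⊢
  obtain ⟨c, hc, h⟩ := exists_pos_one_sub_normSq_discShift_eq ha hw
  rw [← sq_le_one_iff₀ (norm_nonneg _), ← normSq_eq_norm_sq] at hw ⊢
  nlinarith

theorem mapsTo_discShift_ball (ha : ‖a‖ < 1) :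
    MapsTo (discShift a) (ball 0 1) (ball 0 1) := by
  intro w hw
  rw [mem_ball_zero_iff] at hw ⊢
  obtain ⟨c, hc, h⟩ := exists_pos_one_sub_normSq_discShift_eq ha hw.le
  rw [← sq_lt_one_iff₀ (norm_nonneg _), ← normSq_eq_norm_sq] at hw ⊢
  nlinarith

theorem mapsTo_discShift_sphere (ha : ‖a‖ < 1) :
    MapsTo (discShift a) (sphere 0 1) (sphere 0 1) := by
  intro w hw
  rw [mem_sphere_zero_iff_norm] at hw ⊢
  obtain ⟨c, hc, h⟩ := exists_pos_one_sub_normSq_discShift_eq ha hw.le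
  rw [← pow_eq_one_iff_of_nonneg (norm_nonneg _) two_ne_zero, ← normSq_eq_norm_sq] at hw ⊢
  rw [hw, sub_self, mul_zero, sub_eq_zero] at h
  exact h.symm

theorem differentiableOn_discShift (ha : ‖a‖ < 1) :
    DifferentiableOn ℂ (discShift a) (closedBall 0 1) :=
  DifferentiableOn.div (by fun_prop) (by fun_prop) fun _ hw =>
    one_add_conj_mul_ne_zero ha (mem_closedBall_zero_iff.mp hw)

end Complex

theorem erealToENNReal_mono : Monotone erealToENNReal := by
  intro x y h
  unfold erealToENNReal
  rcases eq_or_ne y ⊤ with rfl | hy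
  · simp
  have hx : x ≠ ⊤ := ne_top_of_le_ne_top hy h
  rw [if_neg hx, if_neg hy]
  rcases eq_or_ne x ⊥ with rfl | hx'
  · simp
  · exact ENNReal.ofReal_le_ofReal (EReal.toReal_le_toReal h hx' hy)

theorem erealToENNReal_coe (r : ℝ) : erealToENNReal r = ENNReal.ofReal r := by
  simp [erealToENNReal]

theorem circAvg_mono {g h : ℝ → EReal} (hgh : g ≤ h) : circAvg g ≤ circAvg h := by
  refine EReal.sub_le_sub (EReal.coe_ennreal_le_coe_ennreal_iff.mpr ?_)
    (EReal.coe_ennreal_le_coe_ennreal_iff.mpr ?_) <;>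
  refine ENNReal.div_le_div_right (lintegral_mono fun t => erealToENNReal_mono ?_) _
  · exact hgh t
  · exact EReal.neg_le_neg_iff.mpr (hgh t)

theorem circAvg_const (c : ℝ) : circAvg (fun _ => c) = c := by
  have h2π : ENNReal.ofReal (2 * π) ≠ 0 := by simp [Real.pi_pos]
  simp only [circAvg, ← EReal.coe_neg, erealToENNReal_coe, setLIntegral_const, Real.volume_Ioc,
    sub_zero, ENNReal.mul_div_cancel_right h2π ENNReal.ofReal_ne_top, EReal.coe_ennreal_ofReal]
  norm_cast
  rcases le_total 0 c with hc | hc <;> simp [hc]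

section Manifold

variable {X : Type*} [TopologicalSpace X] [ChartedSpace E X]

theorem IsDiscM.comp_discShift {f : ℂ → X} (hf : IsDiscM E f) {a : ℂ} (ha : ‖a‖ < 1) :
    IsDiscM E (f ∘ Complex.discShift a) :=
  ⟨hf.1.comp (Complex.differentiableOn_discShift ha).continuousOn
      (Complex.mapsTo_discShift_closedBall ha),
    hf.2.comp (mdifferentiableOn_iff_differentiableOn.mpr
      ((Complex.differentiableOn_discShift ha).mono ball_subset_closedBall))
      (Complex.mapsTo_discShift_ball ha)⟩

/-- Maximum principle on an analytic disc: reparametrising by `discShift z` puts `f z` at the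
centre, where the sub-mean-value inequality applies. -/
theorem PSHOnM.le_of_le_on_sphere {u : X → EReal} {S : Set X} (hu : PSHOnM E u S) {f : ℂ → X}
    (hf : IsDiscM E f) (hfS : MapsTo f (closedBall 0 1) S) {c : ℝ}
    (hbd : ∀ w ∈ sphere (0 : ℂ) 1, u (f w) ≤ c) {z : ℂ} (hz : z ∈ closedBall (0 : ℂ) 1) :
    u (f z) ≤ c := by
  rcases (mem_closedBall_zero_iff.mp hz).eq_or_lt with hz1 | hz1
  · exact hbd z (mem_sphere_zero_iff_norm.mpr hz1)
  have hmean := hu.2.2 _ (hf.comp_discShift hz1)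
    (hfS.comp (Complex.mapsTo_discShift_closedBall hz1))
  rw [Function.comp_apply, Complex.discShift_zero] at hmean
  refine hmean.trans (circAvg_const c ▸ circAvg_mono fun t => hbd _ ?_)
  exact Complex.mapsTo_discShift_sphere hz1 (by simp [Complex.norm_exp_ofReal_mul_I])

end Manifold

theorem stmt5_general (E : Type*) [NormedAddCommGroup E] [NormedSpace ℂ E]
    {X : Type*} [TopologicalSpace X] [ChartedSpace E X]
    (W : Set X)
    (hcov : ∀ x : X, ∃ f : ℂ → X, IsDiscM E f ∧ MapsTo f (sphere 0 1) W ∧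
      ∃ z ∈ closedBall (0:ℂ) 1, f z = x)
    (φ : X → EReal)
    (m : ℝ) (hm : ∀ w ∈ W, φ w ≤ (m : EReal)) (n : ℝ) (hn : m ≤ n) :
    (fun x => ⨆ u : {u : X → EReal // PSHOnM E u univ ∧
        ∀ y : X, u y ≤ (if y ∈ W then φ y else (n : EReal))}, u.1 x) =
    (fun x => ⨆ u : {u : X → EReal // PSHOnM E u univ ∧ ∀ w ∈ W, u w ≤ φ w}, u.1 x) := by
  funext x
  apply le_antisymm
  · refine iSup_le fun u => le_iSup_of_le ⟨u.1, u.2.1, fun w hw => ?_⟩ le_rfl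
    simpa [hw] using u.2.2 w
  · refine iSup_le fun u => le_iSup_of_le ⟨u.1, u.2.1, fun y => ?_⟩ le_rfl
    split_ifs with hy
    · exact u.2.2 y hy
    obtain ⟨f, hf, hfW, z, hz, rfl⟩ := hcov y
    refine u.2.1.le_of_le_on_sphere hf (mapsTo_univ _ _) (fun w hw => ?_) hz
    exact (u.2.2 _ (hfW hw)).trans ((hm _ (hfW hw)).trans (EReal.coe_le_coe_iff.mpr hn))

/-- for `W` a domain in a complex manifold `X` covered by analytic discs
with boundaries in `W`, `φ` upper semicontinuous on `W` and bounded above by `m`, and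
`φₙ = φ` on `W`, `= n` off `W` (for real `n ≥ m`), the largest plurisubharmonic minorant
`Pφₙ` equals the largest plurisubharmonic subextension `Sφ`. -/
theorem stmt5 (E : Type*) [NormedAddCommGroup E] [NormedSpace ℂ E]
    {X : Type*} [TopologicalSpace X] [ChartedSpace E X]
    (W : Set X) (hWo : IsOpen W) (hWc : IsConnected W)
    (hcov : ∀ x : X, ∃ f : ℂ → X, IsDiscM E f ∧ MapsTo f (sphere 0 1) W ∧
      ∃ z ∈ closedBall (0:ℂ) 1, f z = x)
    (φ : X → EReal) (husc : UpperSemicontinuousOn φ W) (hne : ∀ w ∈ W, φ w ≠ ⊤)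
    (m : ℝ) (hm : ∀ w ∈ W, φ w ≤ (m : EReal)) (n : ℝ) (hn : m ≤ n) :
    (fun x => ⨆ u : {u : X → EReal // PSHOnM E u univ ∧
        ∀ y : X, u y ≤ (if y ∈ W then φ y else (n : EReal))}, u.1 x) =
    (fun x => ⨆ u : {u : X → EReal // PSHOnM E u univ ∧ ∀ w ∈ W, u w ≤ φ w}, u.1 x) :=
  stmt5_general E W hcov φ m hm n hn
end

section
/- Let F : closure(𝔻) × (closure(𝔻)\{0}) → ℂⁿ be continuous, holomorphic in each variable on the open sets, such that for each z the map w ↦ F(z,w) − h(w) has a pole at 0 of order at most j (where h : closure(𝔻) → ℂⁿ is continuous, holomorphic on 𝔻), and for each w ≠ 0 the map z ↦ F(z,w) − h(w) vanishes at z = 0. Then for every integer k ≥ j, the map (z,w) ↦ F(z w^k, w) extends to a continuous map closure(𝔻) × closure(𝔻) → ℂⁿ that is holomorphic on 𝔻 × 𝔻. -/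
/-
Put `Φ(y, w) = wʲ • (F(y, w) - h(w))`. Each slice `Φ(y, ·)` has a removable singularity at `0`,
and one Cauchy integral over `|η| = 1/2` in the second variable fills in all of them at once; by
Osgood's lemma (continuity plus separate holomorphy) the result is continuous, and holomorphic in
both variables. As `Φ(0, w) = 0`, the difference quotient `D(y, w) = Φ(y, w) / y` (a `dslope`,
which is again a Cauchy integral) is holomorphic as well, and for `w ≠ 0`
`F(z wᵏ, w) = h(w) + z wᵏ⁻ʲ • D(z wᵏ, w)`.
The right-hand side is the extension near `w = 0`; away from `w = 0` the map `(z, w) ↦ F(z wᵏ, w)`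
is holomorphic by Osgood's lemma applied to `F`.
-/

open Metric Set Function MeasureTheory
open scoped Real Topology Interval

theorem norm_mul_pow_le {z w : ℂ} (hw : ‖w‖ ≤ 1) (K : ℕ) : ‖z * w ^ K‖ ≤ ‖z‖ := by
  rw [norm_mul, norm_pow]
  exact mul_le_of_le_one_right (norm_nonneg z) (pow_le_one₀ (norm_nonneg w) hw)

theorem mapsTo_mul_pow_closedBall {t : Set ℂ} (ht : t ⊆ closedBall 0 1) (K : ℕ) :
    MapsTo (fun p : ℂ × ℂ => (p.1 * p.2 ^ K, p.2)) (closedBall 0 1 ×ˢ t) (closedBall 0 1 ×ˢ t) :=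
  fun _ hp => ⟨mem_closedBall_zero_iff.2 <|
    (norm_mul_pow_le (mem_closedBall_zero_iff.1 (ht hp.2)) K).trans
      (mem_closedBall_zero_iff.1 hp.1), hp.2⟩

theorem mapsTo_mul_pow_ball {t : Set ℂ} (ht : t ⊆ closedBall 0 1) (K : ℕ) :
    MapsTo (fun p : ℂ × ℂ => (p.1 * p.2 ^ K, p.2)) (ball 0 1 ×ˢ t) (ball 0 1 ×ˢ t) :=
  fun _ hp => ⟨mem_ball_zero_iff.2 <|
    (norm_mul_pow_le (mem_closedBall_zero_iff.1 (ht hp.2)) K).trans_lt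
      (mem_ball_zero_iff.1 hp.1), hp.2⟩

section Holomorphy

variable {E : Type*} [NormedAddCommGroup E] [NormedSpace ℂ E]

theorem continuousOn_circleIntegral_of_continuousOn {X : Type*} [TopologicalSpace X] {s : Set X}
    {f : X → ℂ → E} {c : ℂ} {R : ℝ} (hR : 0 ≤ R) (hf : ContinuousOn (uncurry f) (s ×ˢ sphere c R)) :
    ContinuousOn (fun x => ∮ z in C(c, R), f x z) s := by
  rw [continuousOn_iff_continuous_domRestrict]
  refine intervalIntegral.continuous_parametric_intervalIntegral_of_continuous'
    (f := fun (x : s) θ => deriv (circleMap c R) θ • f x (circleMap c R θ)) ?_ _ _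
  simp only [deriv_circleMap]
  refine Continuous.smul (by fun_prop) (hf.comp_continuous
    (f := fun q : s × ℝ => ((q.1 : X), circleMap c R q.2)) (by fun_prop) fun q => ?_)
  exact ⟨q.1.2, circleMap_mem_sphere c hR q.2⟩

variable {X : Type*} {c : ℂ} {R : ℝ}

noncomputable def circleCauchy (c : ℂ) (R : ℝ) (f : X → ℂ → E) (p : X × ℂ) : E :=
  (2 * π * Complex.I : ℂ)⁻¹ • ∮ η in C(c, R), (η - p.2)⁻¹ • f p.1 η

theorem continuousOn_circleCauchy [TopologicalSpace X] {f : X → ℂ → E} {s : Set X}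
    (hf : ContinuousOn (uncurry f) (s ×ˢ sphere c R)) :
    ContinuousOn (circleCauchy c R f) (s ×ˢ ball c R) := by
  intro p hp
  refine ((continuousOn_circleIntegral_of_continuousOn (pos_of_mem_ball hp.2).le ?_).const_smul _)
    p hp
  refine ContinuousOn.smul (ContinuousOn.inv₀ (by fun_prop) fun q hq => ?_) ?_
  · exact sub_ne_zero.2 fun h => (mem_sphere.1 hq.2).not_lt (h ▸ hq.1.2)
  · exact hf.comp (f := fun q : (X × ℂ) × ℂ => (q.1.1, q.2)) (by fun_prop)
      fun q hq => ⟨hq.1.1, hq.2⟩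

variable [CompleteSpace E]

theorem continuous_deriv_of_continuousOn {U : Set ℂ} (hU : IsOpen U) {f : ℂ → ℝ → E}
    (hc : ContinuousOn (uncurry f) (U ×ˢ univ)) (hd : ∀ t, DifferentiableOn ℂ (f · t) U)
    {z₀ : ℂ} (hz₀ : z₀ ∈ U) :
    Continuous fun t => deriv (f · t) z₀ := by
  obtain ⟨r, hr, hrU⟩ := Metric.nhds_basis_closedBall.mem_iff.1 (hU.mem_nhds hz₀)
  have hcauchy : ∀ t, deriv (f · t) z₀ = (2 * π * Complex.I : ℂ)⁻¹ •
      ∮ ζ in C(z₀, r), ((ζ - z₀) ^ 2)⁻¹ • f ζ t := fun t =>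
    (Complex.two_pi_I_inv_smul_circleIntegral_sub_sq_inv_smul_of_differentiable hU hrU (hd t)
      (mem_ball_self hr)).symm
  simp only [hcauchy, ← continuousOn_univ]
  refine (continuousOn_circleIntegral_of_continuousOn hr.le ?_).const_smul _
  refine ContinuousOn.smul (ContinuousOn.inv₀ (by fun_prop) fun q hq => ?_) ?_
  · simpa [sub_eq_zero] using ne_of_mem_sphere hq.2 hr.ne'
  · exact hc.comp continuous_swap.continuousOn fun q hq =>
      ⟨hrU (sphere_subset_closedBall hq.2), trivial⟩

theorem differentiableOn_intervalIntegral_of_differentiableOn {U : Set ℂ}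
    (hU : IsOpen U) {f : ℂ → ℝ → E} {a b : ℝ} (hc : ContinuousOn (uncurry f) (U ×ˢ univ))
    (hd : ∀ t, DifferentiableOn ℂ (f · t) U) :
    DifferentiableOn ℂ (fun z => ∫ t in a..b, f z t) U := by
  intro z₀ hz₀
  obtain ⟨ε, hε, hεU⟩ := Metric.isOpen_iff.1 hU z₀ hz₀
  obtain ⟨r, hr, hrU⟩ : ∃ r > 0, closedBall z₀ (2 * r) ⊆ U :=
    ⟨ε / 3, by positivity, (closedBall_subset_ball (by linarith)).trans hεU⟩
  obtain ⟨M, hM⟩ := ((isCompact_closedBall z₀ (2 * r)).prod (isCompact_uIcc (a := a) (b := b)))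
    |>.exists_bound_of_continuousOn (hc.mono (prod_mono hrU (subset_univ _)))
  have hslice : ∀ z ∈ U, Continuous (f z) := fun z hz =>
    hc.comp_continuous (f := fun t => (z, t)) (by fun_prop) fun _ => ⟨hz, trivial⟩
  have hderiv_le : ∀ t ∈ [[a, b]], ∀ z ∈ ball z₀ r, ‖deriv (f · t) z‖ ≤ 2 * M / r := by
    intro t ht z hz
    have hball : ball z r ⊆ closedBall z₀ (2 * r) := fun x hx => by
      rw [mem_closedBall]; linarith [dist_triangle x z z₀, mem_ball.1 hx, mem_ball.1 hz]
    refine Complex.norm_deriv_le_div_of_mapsTo_ball ((hd t).mono (hball.trans hrU))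
      (fun x hx => ?_) hr
    rw [mem_closedBall, dist_eq_norm]
    calc ‖f x t - f z t‖ ≤ ‖f x t‖ + ‖f z t‖ := norm_sub_le _ _
      _ ≤ M + M := add_le_add (hM (x, t) ⟨hball hx, ht⟩)
          (hM (z, t) ⟨hball (mem_ball_self hr), ht⟩)
      _ = 2 * M := by ring
  have hmain := intervalIntegral.hasDerivAt_integral_of_dominated_loc_of_deriv_le
    (μ := volume) (F' := fun z t => deriv (f · t) z) (bound := fun _ => 2 * M / r)
    (ball_mem_nhds z₀ hr)
    (Filter.eventually_of_mem (hU.mem_nhds hz₀) fun z hz => (hslice z hz).aestronglyMeasurable)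
    ((hslice z₀ hz₀).intervalIntegrable _ _)
    (continuous_deriv_of_continuousOn hU hc hd hz₀).aestronglyMeasurable
    (Filter.Eventually.of_forall fun t ht => hderiv_le t (uIoc_subset_uIcc ht))
    intervalIntegrable_const
    (Filter.Eventually.of_forall fun t _ z hz =>
      ((hd t).differentiableAt (hU.mem_nhds (hrU ?_))).hasDerivAt)
  · exact hmain.2.differentiableAt.differentiableWithinAt
  · exact closedBall_subset_closedBall (by linarith) (ball_subset_closedBall hz)

theorem differentiableOn_circleIntegral_of_differentiableOn {U : Set ℂ}
    (hU : IsOpen U) {f : ℂ → ℂ → E} (hR : 0 ≤ R)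
    (hc : ContinuousOn (uncurry f) (U ×ˢ sphere c R))
    (hd : ∀ ζ ∈ sphere c R, DifferentiableOn ℂ (f · ζ) U) :
    DifferentiableOn ℂ (fun z => ∮ ζ in C(c, R), f z ζ) U := by
  refine differentiableOn_intervalIntegral_of_differentiableOn hU
    (f := fun z θ => deriv (circleMap c R) θ • f z (circleMap c R θ)) ?_
    fun θ => (hd _ (circleMap_mem_sphere c hR θ)).const_smul _
  simp only [deriv_circleMap]
  exact ContinuousOn.smul (by fun_prop) (hc.comp
    (f := fun q : ℂ × ℝ => (q.1, circleMap c R q.2)) (by fun_prop)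
    fun q hq => ⟨hq.1, circleMap_mem_sphere c hR q.2⟩)

theorem continuousAt_deriv_fst {U : Set (ℂ × ℂ)} (hU : IsOpen U) {f : ℂ × ℂ → E}
    (hc : ContinuousOn f U) (hd : ∀ p ∈ U, DifferentiableAt ℂ (fun z => f (z, p.2)) p.1)
    {u : ℂ × ℂ} (hu : u ∈ U) :
    ContinuousAt (fun p : ℂ × ℂ => deriv (fun z => f (z, p.2)) p.1) u := by
  obtain ⟨ε, hε, hεU⟩ := Metric.isOpen_iff.1 hU u hu
  obtain ⟨r, hr, hrε⟩ : ∃ r > 0, r < ε := ⟨ε / 2, by positivity, by linarith⟩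
  have hcauchy : ∀ p ∈ ball u r, deriv (fun z => f (z, p.2)) p.1 =
      (2 * π * Complex.I : ℂ)⁻¹ • ∮ ζ in C(u.1, r), ((ζ - p.1) ^ 2)⁻¹ • f (ζ, p.2) := by
    intro p hp
    rw [← ball_prod_same] at hp
    refine (Complex.two_pi_I_inv_smul_circleIntegral_sub_sq_inv_smul_of_differentiable
      (U := (·, p.2) ⁻¹' U) (hU.preimage (by fun_prop)) (fun ζ hζ => hεU ?_)
      (fun z hz => (hd _ hz).differentiableWithinAt) hp.1).symm
    rw [← ball_prod_same]
    exact ⟨closedBall_subset_ball hrε hζ, ball_subset_ball hrε.le hp.2⟩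
  refine ((continuousOn_circleIntegral_of_continuousOn hr.le ?_).const_smul _
    |>.congr hcauchy).continuousAt (ball_mem_nhds u hr)
  refine ContinuousOn.smul (ContinuousOn.inv₀ (by fun_prop) fun q hq => ?_) ?_
  · rw [← ball_prod_same] at hq
    refine pow_ne_zero 2 (sub_ne_zero.2 fun h => ?_)
    exact (mem_sphere.1 hq.2).not_lt (h ▸ hq.1.1)
  · refine hc.comp (by fun_prop) fun q hq => hεU ?_
    rw [← ball_prod_same] at hq ⊢
    exact ⟨sphere_subset_closedBall.trans (closedBall_subset_ball hrε) hq.2,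
      ball_subset_ball hrε.le hq.1.2⟩

theorem differentiableOn_of_continuousOn_of_separately {U : Set (ℂ × ℂ)} (hU : IsOpen U)
    {f : ℂ × ℂ → E} (hc : ContinuousOn f U)
    (h₁ : ∀ p ∈ U, DifferentiableAt ℂ (fun z => f (z, p.2)) p.1)
    (h₂ : ∀ p ∈ U, DifferentiableAt ℂ (fun w => f (p.1, w)) p.2) :
    DifferentiableOn ℂ f U := by
  intro u hu
  have hc₂ : ContinuousAt (fun p : ℂ × ℂ => deriv (fun w => f (p.1, w)) p.2) u :=
    (continuousAt_deriv_fst (hU.preimage continuous_swap) (hc.comp continuous_swap.continuousOn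
      fun _ => id) (fun p hp => h₂ p.swap hp) (u := u.swap) hu).comp continuous_swap.continuousAt
  have hsmulRight : Continuous fun x : E => (1 : ℂ →L[ℂ] ℂ).smulRight x :=
    (ContinuousLinearMap.smulRightL ℂ ℂ E 1).continuous
  refine (hasStrictFDerivAt_uncurry_coprod (f := curry f)
    (f₁ := fun z w => (1 : ℂ →L[ℂ] ℂ).smulRight (deriv (fun z => f (z, w)) z))
    (f₂ := fun z w => (1 : ℂ →L[ℂ] ℂ).smulRight (deriv (fun w => f (z, w)) w)) ?_ ?_
    (hsmulRight.continuousAt.comp (continuousAt_deriv_fst hU hc h₁ hu))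
    (hsmulRight.continuousAt.comp hc₂)).hasFDerivAt.differentiableAt.differentiableWithinAt
  · filter_upwards [hU.mem_nhds hu] with p hp using (h₁ p hp).hasDerivAt.hasFDerivAt
  · filter_upwards [hU.mem_nhds hu] with p hp using (h₂ p hp).hasDerivAt.hasFDerivAt

theorem circleCauchy_eq {f : X → ℂ → E} {x : X} {w : ℂ} {g : ℂ → E}
    (hg : DiffContOnCl ℂ g (ball c R)) (hfg : EqOn (f x) g (sphere c R)) (hw : w ∈ ball c R) :
    circleCauchy c R f (x, w) = g w := by
  rw [circleCauchy, circleIntegral.integral_congr (pos_of_mem_ball hw).le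
    fun η hη => congrArg _ (hfg hη), hg.two_pi_i_inv_smul_circleIntegral_sub_inv_smul hw]

theorem differentiableOn_circleCauchy {f : ℂ → ℂ → E} {U : Set ℂ}
    (hU : IsOpen U) (hf : ContinuousOn (uncurry f) (U ×ˢ sphere c R))
    (hd : ∀ η ∈ sphere c R, DifferentiableOn ℂ (f · η) U) :
    DifferentiableOn ℂ (circleCauchy c R f) (U ×ˢ ball c R) := by
  refine differentiableOn_of_continuousOn_of_separately (hU.prod isOpen_ball)
    (continuousOn_circleCauchy hf) (fun p hp => ?_) (fun p hp => ?_)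
  · have hR := (pos_of_mem_ball hp.2).le
    have hslice : DifferentiableOn ℂ (fun x => circleCauchy c R f (x, p.2)) U := by
      unfold circleCauchy
      refine (differentiableOn_circleIntegral_of_differentiableOn hU hR ?_
        fun η hη => (hd η hη).fun_const_smul ((η - p.2)⁻¹)).fun_const_smul _
      show ContinuousOn (fun q : ℂ × ℂ => (q.2 - p.2)⁻¹ • f q.1 q.2) _
      refine ContinuousOn.smul (ContinuousOn.inv₀ (by fun_prop) fun q hq => ?_) hf
      exact sub_ne_zero.2 fun h => (mem_sphere.1 hq.2).not_lt (h ▸ hp.2)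
    exact hslice.differentiableAt (hU.mem_nhds hp.1)
  · have hR := (pos_of_mem_ball hp.2).le
    have hslice : DifferentiableOn ℂ (fun w => circleCauchy c R f (p.1, w)) (ball c R) := by
      unfold circleCauchy
      refine (differentiableOn_circleIntegral_of_differentiableOn isOpen_ball hR ?_
        fun η hη => ?_).fun_const_smul _
      · refine ContinuousOn.smul (ContinuousOn.inv₀ (by fun_prop) fun q hq => ?_) ?_
        · exact sub_ne_zero.2 fun h => (mem_sphere.1 hq.2).not_lt (h ▸ hq.1)
        · exact hf.comp (f := fun q : ℂ × ℂ => (p.1, q.2)) (by fun_prop)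
            fun q hq => ⟨hp.1, hq.2⟩
      · refine DifferentiableOn.smul_const (DifferentiableOn.fun_inv
          (by fun_prop : DifferentiableOn ℂ (fun w : ℂ => η - w) (ball c R)) fun w hw => ?_)
          (f p.1 η)
        exact sub_ne_zero.2 fun h => (mem_sphere.1 hη).not_lt (h ▸ hw)
    exact hslice.differentiableAt (isOpen_ball.mem_nhds hp.2)

theorem DifferentiableOn.dslope_fst {Φ : ℂ × ℂ → E} {V : Set ℂ} (hV : IsOpen V)
    (hΦ : DifferentiableOn ℂ Φ (ball c R ×ˢ V)) :
    DifferentiableOn ℂ (fun p => dslope (fun z => Φ (z, p.2)) c p.1) (ball c R ×ˢ V) := by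
  intro p hp
  obtain ⟨r, hpr, hrR⟩ := exists_between (mem_ball.1 hp.1)
  have hr : 0 < r := dist_nonneg.trans_lt hpr
  have hsphere : sphere c r ⊆ ball c R :=
    sphere_subset_closedBall.trans (closedBall_subset_ball hrR)
  -- Off `ζ = c` the slope is holomorphic in `w`, and Cauchy's formula on `C(c, r)` turns the
  -- `dslope` into a `circleCauchy` integral of it.
  set f : ℂ → ℂ → E := fun w ζ => (ζ - c)⁻¹ • (Φ (ζ, w) - Φ (c, w))
  have hf : ContinuousOn (uncurry f) (V ×ˢ sphere c r) := by
    refine ContinuousOn.smul (ContinuousOn.inv₀ (by fun_prop) fun q hq => ?_)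
      (ContinuousOn.sub ?_ ?_)
    · exact sub_ne_zero.2 (ne_of_mem_sphere hq.2 hr.ne')
    · exact hΦ.continuousOn.comp (f := Prod.swap) (by fun_prop) fun q hq => ⟨hsphere hq.2, hq.1⟩
    · exact hΦ.continuousOn.comp (f := fun q : ℂ × ℂ => (c, q.1)) (by fun_prop)
        fun q hq => ⟨mem_ball_self (hr.trans hrR), hq.1⟩
  have hfd : ∀ ζ ∈ sphere c r, DifferentiableOn ℂ (f · ζ) V := fun ζ hζ =>
    (DifferentiableOn.sub (hΦ.comp (f := fun w => (ζ, w)) (by fun_prop)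
      fun w hw => ⟨hsphere hζ, hw⟩) (hΦ.comp (f := fun w => (c, w)) (by fun_prop)
      fun w hw => ⟨mem_ball_self (hr.trans hrR), hw⟩)).fun_const_smul _
  have heq : EqOn (fun p => circleCauchy c r f p.swap)
      (fun p => dslope (fun z => Φ (z, p.2)) c p.1) (ball c r ×ˢ V) := by
    rintro q ⟨hq1, hq2⟩
    have hslice : DifferentiableOn ℂ (fun z => Φ (z, q.2)) (ball c R) :=
      hΦ.comp (by fun_prop) fun z hz => ⟨hz, hq2⟩
    have hg := (Complex.differentiableOn_dslope (ball_mem_nhds c (hr.trans hrR))).2 hslice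
    refine circleCauchy_eq (hg.diffContOnCl_ball (closedBall_subset_ball hrR)) (fun ζ hζ => ?_) hq1
    rw [dslope_of_ne _ (ne_of_mem_sphere hζ hr.ne'), slope_def_module]
  have hd : DifferentiableOn ℂ (fun p => circleCauchy c r f p.swap) (ball c r ×ˢ V) :=
    (differentiableOn_circleCauchy hV hf hfd).comp
      (differentiable_snd.prodMk differentiable_fst).differentiableOn fun q hq => ⟨hq.2, hq.1⟩
  exact ((hd.congr heq.symm).differentiableAt ((isOpen_ball.prod hV).mem_nhds
    ⟨mem_ball.2 hpr, hp.2⟩)).differentiableWithinAt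

theorem ContinuousOn.dslope_fst {Φ : ℂ × ℂ → E} {V s : Set ℂ} (hc : ContinuousOn Φ (s ×ˢ V))
    (hV : IsOpen V) (hR : 0 < R) (hd : DifferentiableOn ℂ Φ (ball c R ×ˢ V)) :
    ContinuousOn (fun p => dslope (fun z => Φ (z, p.2)) c p.1) (s ×ˢ V) := by
  intro p hp
  by_cases hpc : p.1 = c
  · have hmem : p ∈ ball c R ×ˢ V := ⟨hpc ▸ mem_ball_self hR, hp.2⟩
    exact ((hd.dslope_fst hV).continuousOn.continuousAt
      ((isOpen_ball.prod hV).mem_nhds hmem)).continuousWithinAt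
  · have hΦc : ContinuousAt (fun q : ℂ × ℂ => Φ (c, q.2)) p :=
      (hd.continuousOn.continuousAt ((isOpen_ball.prod hV).mem_nhds
        (show (c, p.2) ∈ ball c R ×ˢ V from ⟨mem_ball_self hR, hp.2⟩))).comp
        (f := fun q : ℂ × ℂ => (c, q.2)) (by fun_prop)
    have hslope : ContinuousWithinAt (fun q : ℂ × ℂ => (q.1 - c)⁻¹ • (Φ q - Φ (c, q.2)))
        (s ×ˢ V) p :=
      ((continuous_fst.sub continuous_const).continuousAt.inv₀
        (sub_ne_zero.2 hpc)).continuousWithinAt.smul ((hc p hp).sub hΦc.continuousWithinAt)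
    refine hslope.congr_of_eventuallyEq ?_ ?_
    · filter_upwards [mem_nhdsWithin_of_mem_nhds
        ((isOpen_ne_fun continuous_fst continuous_const).mem_nhds hpc)] with q hq
      rw [dslope_of_ne _ hq, slope_def_module]
    · rw [dslope_of_ne _ hpc, slope_def_module]

variable {F : ℂ × ℂ → E} {h : ℂ → E} {j : ℕ}

theorem exists_extension_across_axis_of_pole {r : ℝ} (hr0 : 0 < r) (hr1 : r < 1)
    (hhc : ContinuousOn h (closedBall 0 1))
    (hFc : ContinuousOn F (closedBall 0 1 ×ˢ (closedBall 0 1 \ {0})))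
    (hFz : ∀ w ∈ closedBall (0:ℂ) 1 \ {0}, DifferentiableOn ℂ (fun z => F (z, w)) (ball 0 1))
    (hpole : ∀ z ∈ closedBall (0:ℂ) 1, ∃ g : ℂ → E, DifferentiableOn ℂ g (ball 0 1) ∧
      ∀ w ∈ ball (0:ℂ) 1 \ {0}, g w = w ^ j • (F (z, w) - h w)) :
    ∃ Φ : ℂ × ℂ → E, ContinuousOn Φ (closedBall 0 1 ×ˢ ball 0 r) ∧
      DifferentiableOn ℂ Φ (ball 0 1 ×ˢ ball 0 r) ∧
      ∀ y ∈ closedBall (0:ℂ) 1, ∀ w ∈ ball (0:ℂ) r \ {0}, Φ (y, w) = w ^ j • (F (y, w) - h w) := by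
  have hsphere : sphere (0:ℂ) r ⊆ ball 0 1 \ {0} := fun η hη =>
    ⟨sphere_subset_closedBall.trans (closedBall_subset_ball hr1) hη, ne_of_mem_sphere hη hr0.ne'⟩
  have hf : ContinuousOn (uncurry fun y η => η ^ j • (F (y, η) - h η))
      (closedBall 0 1 ×ˢ sphere 0 r) := by
    refine ContinuousOn.smul (by fun_prop) (ContinuousOn.sub (hFc.mono ?_) ?_)
    · exact prod_mono subset_rfl fun η hη => ⟨ball_subset_closedBall (hsphere hη).1, (hsphere hη).2⟩
    · exact hhc.comp continuous_snd.continuousOn fun q hq => ball_subset_closedBall (hsphere hq.2).1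
  refine ⟨circleCauchy 0 r fun y η => η ^ j • (F (y, η) - h η), continuousOn_circleCauchy hf,
    differentiableOn_circleCauchy isOpen_ball
      (hf.mono (prod_mono ball_subset_closedBall subset_rfl))
      fun η hη => ((hFz η ?_).sub_const _).const_smul _, fun y hy w hw => ?_⟩
  · exact ⟨ball_subset_closedBall (hsphere hη).1, (hsphere hη).2⟩
  obtain ⟨g, hg, hgF⟩ := hpole y hy
  rw [circleCauchy_eq (hg.diffContOnCl_ball (closedBall_subset_ball hr1))
    (fun η hη => (hgF η (hsphere hη)).symm) hw.1]
  exact hgF w ⟨ball_subset_ball hr1.le hw.1, hw.2⟩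

theorem exists_extension_comp_mul_pow_near_axis {K : ℕ} (hjK : j ≤ K)
    (hhc : ContinuousOn h (closedBall 0 1)) (hhd : DifferentiableOn ℂ h (ball 0 1))
    (hFc : ContinuousOn F (closedBall 0 1 ×ˢ (closedBall 0 1 \ {0})))
    (hFz : ∀ w ∈ closedBall (0:ℂ) 1 \ {0}, DifferentiableOn ℂ (fun z => F (z, w)) (ball 0 1))
    (hpole : ∀ z ∈ closedBall (0:ℂ) 1, ∃ g : ℂ → E, DifferentiableOn ℂ g (ball 0 1) ∧
      ∀ w ∈ ball (0:ℂ) 1 \ {0}, g w = w ^ j • (F (z, w) - h w))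
    (hF0 : ∀ w ∈ closedBall (0:ℂ) 1 \ {0}, F (0, w) = h w) :
    ∃ N : ℂ × ℂ → E, ContinuousOn N (closedBall 0 1 ×ˢ ball 0 (1 / 2)) ∧
      DifferentiableOn ℂ N (ball 0 1 ×ˢ ball 0 (1 / 2)) ∧
      ∀ p ∈ closedBall (0:ℂ) 1 ×ˢ ball 0 (1 / 2), p.2 ≠ 0 → N p = F (p.1 * p.2 ^ K, p.2) := by
  obtain ⟨Φ, hΦc, hΦd, hΦF⟩ :=
    exists_extension_across_axis_of_pole (r := 1 / 2) (by norm_num) (by norm_num) hhc hFc hFz hpole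
  have hDc := hΦc.dslope_fst (c := 0) isOpen_ball one_pos hΦd
  have hDd := hΦd.dslope_fst isOpen_ball
  have hhalf : ball (0:ℂ) (1 / 2) ⊆ closedBall 0 1 :=
    ball_subset_closedBall.trans (closedBall_subset_closedBall (by norm_num))
  refine ⟨fun p => h p.2 + (p.1 * p.2 ^ (K - j)) • dslope (fun z => Φ (z, p.2)) 0 (p.1 * p.2 ^ K),
    ?_, ?_, ?_⟩
  · exact (hhc.comp continuous_snd.continuousOn fun p hp => hhalf hp.2).add
      ((by fun_prop : Continuous fun p : ℂ × ℂ => p.1 * p.2 ^ (K - j)).continuousOn.smul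
        (hDc.comp (by fun_prop) (mapsTo_mul_pow_closedBall hhalf K)))
  · exact (hhd.comp differentiable_snd.differentiableOn
      fun p hp => ball_subset_ball (by norm_num) hp.2).add
      ((by fun_prop : Differentiable ℂ fun p : ℂ × ℂ => p.1 * p.2 ^ (K - j)).differentiableOn.smul
        (hDd.comp (by fun_prop) (mapsTo_mul_pow_ball hhalf K)))
  · rintro ⟨z, w⟩ ⟨hz, hw⟩ (hw0 : w ≠ 0)
    have hw1 : w ∈ closedBall (0:ℂ) 1 \ {0} := ⟨hhalf hw, hw0⟩
    by_cases hz0 : z = 0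
    · simp [hz0, hF0 w hw1]
    have hy : z * w ^ K ≠ 0 := mul_ne_zero hz0 (pow_ne_zero _ hw0)
    have hscalar : z * w ^ (K - j) * ((z * w ^ K)⁻¹ * w ^ j) = 1 := by
      rw [← pow_sub_mul_pow w hjK]
      field_simp
    simp only [dslope_of_ne _ hy, slope_def_module, sub_zero,
      hΦF _ (mapsTo_mul_pow_closedBall hhalf K ⟨hz, hw⟩).1 w ⟨hw, hw0⟩,
      hΦF 0 (mem_closedBall_self zero_le_one) w ⟨hw, hw0⟩, hF0 w hw1, sub_self, smul_zero,
      smul_smul, hscalar, one_smul, add_sub_cancel]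

end Holomorphy

section Gluing

variable {Y : Type*} [TopologicalSpace Y] {A N : ℂ × ℂ → Y} {s t : Set ℂ} {ρ : ℝ}

theorem ContinuousOn.ite_snd_eq_zero (hρ : 0 < ρ) (hA : ContinuousOn A (s ×ˢ (t \ {0})))
    (hN : ContinuousOn N (s ×ˢ ball 0 ρ)) (hNA : ∀ p ∈ s ×ˢ ball 0 ρ, p.2 ≠ 0 → N p = A p) :
    ContinuousOn (fun p => if p.2 = 0 then N p else A p) (s ×ˢ t) := by
  intro p hp
  by_cases hp2 : p.2 = 0
  · have hnhds : s ×ˢ ball 0 ρ ∈ 𝓝[s ×ˢ t] p := by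
      refine Filter.mem_of_superset (inter_mem_nhdsWithin _ ((isOpen_univ.prod isOpen_ball).mem_nhds
        (show p ∈ univ ×ˢ ball (0 : ℂ) ρ by simp [hp2, hρ]))) ?_
      exact fun q hq => ⟨hq.1.1, hq.2.2⟩
    refine ((hN p ⟨hp.1, by simp [hp2, hρ]⟩).mono_of_mem_nhdsWithin hnhds).congr_of_eventuallyEq
      ?_ (if_pos hp2)
    filter_upwards [hnhds] with q hq
    split_ifs with hq2
    exacts [rfl, (hNA q hq hq2).symm]
  · have hnhds : s ×ˢ (t \ {0}) ∈ 𝓝[s ×ˢ t] p := by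
      refine Filter.mem_of_superset (inter_mem_nhdsWithin _ ((isOpen_univ.prod isOpen_ne).mem_nhds
        (show p ∈ univ ×ˢ {w : ℂ | w ≠ 0} from ⟨trivial, hp2⟩))) ?_
      exact fun q hq => ⟨hq.1.1, hq.1.2, hq.2.2⟩
    refine ((hA p ⟨hp.1, hp.2, hp2⟩).mono_of_mem_nhdsWithin hnhds).congr_of_eventuallyEq
      ?_ (if_neg hp2)
    filter_upwards [hnhds] with q hq
    rw [if_neg (show q.2 ≠ 0 from hq.2.2)]

theorem DifferentiableOn.ite_snd_eq_zero {E : Type*} [NormedAddCommGroup E] [NormedSpace ℂ E]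
    {A N : ℂ × ℂ → E} (hs : IsOpen s) (ht : IsOpen t) (hρ : 0 < ρ)
    (hA : DifferentiableOn ℂ A (s ×ˢ (t \ {0}))) (hN : DifferentiableOn ℂ N (s ×ˢ ball 0 ρ))
    (hNA : ∀ p ∈ s ×ˢ ball 0 ρ, p.2 ≠ 0 → N p = A p) :
    DifferentiableOn ℂ (fun p => if p.2 = 0 then N p else A p) (s ×ˢ t) := by
  intro p hp
  by_cases hp2 : p.2 = 0
  · have hnhds : s ×ˢ ball 0 ρ ∈ 𝓝 p :=
      (hs.prod isOpen_ball).mem_nhds ⟨hp.1, by simp [hp2, hρ]⟩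
    refine ((hN.differentiableAt hnhds).congr_of_eventuallyEq ?_).differentiableWithinAt
    filter_upwards [hnhds] with q hq
    split_ifs with hq2
    exacts [rfl, (hNA q hq hq2).symm]
  · have hnhds : s ×ˢ (t \ {0}) ∈ 𝓝 p :=
      (hs.prod (ht.sdiff isClosed_singleton)).mem_nhds ⟨hp.1, hp.2, hp2⟩
    refine ((hA.differentiableAt hnhds).congr_of_eventuallyEq ?_).differentiableWithinAt
    filter_upwards [hnhds] with q hq
    rw [if_neg (show q.2 ≠ 0 from hq.2.2)]

end Gluing

/-- if `F(z,·) − h` has a pole of order at most `j` at `w = 0` for each `z`,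
and `F(0,w) = h(w)`, then for every `k ≥ j` the map `(z,w) ↦ F(z wᵏ, w)` extends
continuously to the closed bidisc, holomorphically on the open bidisc. -/
theorem stmt8 (n j : ℕ)
    (h : ℂ → EuclideanSpace ℂ (Fin n))
    (hhc : ContinuousOn h (closedBall 0 1)) (hhd : DifferentiableOn ℂ h (ball 0 1))
    (F : ℂ × ℂ → EuclideanSpace ℂ (Fin n))
    (hFc : ContinuousOn F (closedBall 0 1 ×ˢ (closedBall 0 1 \ {0})))
    (hFw : ∀ z ∈ closedBall (0:ℂ) 1,
      DifferentiableOn ℂ (fun w => F (z, w)) (ball 0 1 \ {0}))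
    (hFz : ∀ w ∈ closedBall (0:ℂ) 1 \ {0},
      DifferentiableOn ℂ (fun z => F (z, w)) (ball 0 1))
    (hpole : ∀ z ∈ closedBall (0:ℂ) 1, ∃ g : ℂ → EuclideanSpace ℂ (Fin n),
      DifferentiableOn ℂ g (ball 0 1) ∧
      ∀ w ∈ ball (0:ℂ) 1 \ {0}, g w = w ^ j • (F (z, w) - h w))
    (hF0 : ∀ w ∈ closedBall (0:ℂ) 1 \ {0}, F (0, w) = h w)
    (k : ℤ) (hk : (j : ℤ) ≤ k) :
    ∃ G : ℂ × ℂ → EuclideanSpace ℂ (Fin n),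
      ContinuousOn G (closedBall 0 1 ×ˢ closedBall 0 1) ∧
      DifferentiableOn ℂ G (ball 0 1 ×ˢ ball 0 1) ∧
      ∀ p ∈ (closedBall (0:ℂ) 1) ×ˢ (closedBall (0:ℂ) 1), p.2 ≠ 0 →
        G p = F (p.1 * p.2 ^ k, p.2) := by
  obtain ⟨K, rfl⟩ : ∃ K : ℕ, k = K := ⟨k.toNat, (Int.toNat_of_nonneg (by omega)).symm⟩
  have hpunct : IsOpen (ball (0:ℂ) 1 \ {0}) := isOpen_ball.sdiff isClosed_singleton
  have hFd : DifferentiableOn ℂ F (ball 0 1 ×ˢ (ball 0 1 \ {0})) :=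
    differentiableOn_of_continuousOn_of_separately (isOpen_ball.prod hpunct)
      (hFc.mono (prod_mono ball_subset_closedBall (sdiff_subset_sdiff_left ball_subset_closedBall)))
      (fun p hp => (hFz p.2 ⟨ball_subset_closedBall hp.2.1, hp.2.2⟩).differentiableAt
        (isOpen_ball.mem_nhds hp.1))
      (fun p hp => (hFw p.1 (ball_subset_closedBall hp.1)).differentiableAt (hpunct.mem_nhds hp.2))
  obtain ⟨N, hNc, hNd, hNF⟩ :=
    exists_extension_comp_mul_pow_near_axis (by exact_mod_cast hk) hhc hhd hFc hFz hpole hF0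
  refine ⟨fun p => if p.2 = 0 then N p else F (p.1 * p.2 ^ K, p.2), ?_, ?_,
    fun p _ hp => by simp [hp]⟩
  · exact ContinuousOn.ite_snd_eq_zero one_half_pos
      (hFc.comp (by fun_prop) (mapsTo_mul_pow_closedBall sdiff_subset K)) hNc hNF
  · exact DifferentiableOn.ite_snd_eq_zero isOpen_ball isOpen_ball one_half_pos
      (hFd.comp (by fun_prop) (mapsTo_mul_pow_ball (sdiff_subset.trans ball_subset_closedBall) K))
      hNd fun p hp => hNF p ⟨ball_subset_closedBall hp.1, hp.2⟩
end
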